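/- Let a group Γ act on a set X, let Λ ≤ Γ act freely on X, let G ≤ Γ be finite, and let x ∈ X be fixed by every element of G (G ⊆ Stab_Γ(x)). If Stab_Γ(x) is finite, then the set {λ ∈ Λ | λ⁻¹Gλ ⊆ Stab_Γ(x)} is a finite union of left cosets of Λ ∩ N_Γ(G); in particular the quotient of this set by the right multiplication action of Λ ∩ N_Γ(G) is finite. -/

import Mathlib

/-!
Conjugation `l ↦ (g ↦ l⁻¹ g l)` maps the conjugators (the `l ∈ Λ` with `l⁻¹ G l ⊆ Stab_Γ(x)`)
into the finite set of maps from the finite group `G` to the finite stabilizer. Two conjugators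
with the same image differ by an element of `Λ` centralizing `G`, hence by an element of
`Λ ∩ N_Γ(G)`, and the set of conjugators is stable under left multiplication by `Λ ∩ N_Γ(G)`.
So it is the union of one right coset per value.
-/

open MulOpposite Pointwise

section RightCosets

variable {Γ : Type*} [Group Γ] (H : Subgroup Γ)

theorem image_mul_right_eq_op_smul (s : Set Γ) (a : Γ) : (fun n => n * a) '' s = op a • s := by
  simp only [← Set.image_smul, op_smul_eq_mul]

-- One right coset per value of `f` on `S`, represented by `Function.invFunOn f S`.
theorem exists_finset_eq_biUnion_rightCosets {β : Type*} {S : Set Γ} (f : Γ → β)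
    (hS : ∀ n ∈ H, ∀ l ∈ S, n * l ∈ S)
    (hf : ∀ l ∈ S, ∀ l' ∈ S, f l = f l' → l * l'⁻¹ ∈ H) (hfin : (f '' S).Finite) :
    ∃ F : Finset Γ, S = ⋃ r ∈ F, op r • (H : Set Γ) := by
  classical
  refine ⟨(hfin.image (Function.invFunOn f S)).toFinset, Set.Subset.antisymm ?_ ?_⟩
  · intro l hl
    have hex : ∃ a ∈ S, f a = f l := ⟨l, hl, rfl⟩
    obtain ⟨hrep, hfrep⟩ := Function.invFunOn_pos hex
    refine Set.mem_biUnion (x := Function.invFunOn f S (f l)) ?_ ?_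
    · simpa using ⟨l, hl, rfl⟩
    · exact (mem_rightCoset_iff _).mpr (hf l hl _ hrep hfrep.symm)
  · simp only [Set.iUnion_subset_iff, Set.Finite.mem_toFinset]
    rintro _ ⟨_, ⟨l, hl, rfl⟩, rfl⟩ m hm
    have hrep := Function.invFunOn_mem (⟨l, hl, rfl⟩ : ∃ a ∈ S, f a = f l)
    simpa using hS _ ((mem_rightCoset_iff _).mp hm) _ hrep

theorem finite_setOf_rightCoset_of_eq_biUnion {S : Set Γ} (F : Finset Γ)
    (hS : S = ⋃ r ∈ F, op r • (H : Set Γ)) :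
    {s : Set Γ | ∃ l, l ∈ S ∧ s = op l • (H : Set Γ)}.Finite := by
  refine (F.finite_toSet.image fun r => op r • (H : Set Γ)).subset ?_
  rintro _ ⟨l, hl, rfl⟩
  rw [hS] at hl
  obtain ⟨r, hr, hlr⟩ := Set.mem_iUnion₂.mp hl
  exact ⟨r, hr, (rightCoset_eq_iff H).mpr ((mem_rightCoset_iff r).mp hlr)⟩

end RightCosets

section Conjugators

variable {Γ : Type*} [Group Γ] (Λ : Subgroup Γ) (s T : Set Γ)

def conjugatorsInto : Set Γ := {l | l ∈ Λ ∧ ∀ g ∈ s, l⁻¹ * g * l ∈ T}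

variable {Λ s T}

theorem mul_inv_mem_centralizer_of_conj_eq {l l' : Γ}
    (h : ∀ g ∈ s, l⁻¹ * g * l = l'⁻¹ * g * l') : l * l'⁻¹ ∈ Subgroup.centralizer s :=
  Subgroup.mem_centralizer_iff.mpr fun g hg => by
    calc g * (l * l'⁻¹) = l * (l⁻¹ * g * l) * l'⁻¹ := by group
      _ = l * (l'⁻¹ * g * l') * l'⁻¹ := by rw [h g hg]
      _ = l * l'⁻¹ * g := by group

theorem mul_mem_conjugatorsInto {n l : Γ} (hn : n ∈ Λ ⊓ Subgroup.normalizer s)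
    (hl : l ∈ conjugatorsInto Λ s T) : n * l ∈ conjugatorsInto Λ s T := by
  refine ⟨Λ.mul_mem hn.1 hl.1, fun g hg => ?_⟩
  have hconj : n⁻¹ * g * n ∈ s := (Subgroup.mem_set_normalizer_iff''.mp hn.2 g).mp hg
  simpa [mul_assoc] using hl.2 _ hconj

theorem finite_image_conj_conjugatorsInto [Finite s] (hT : T.Finite) :
    ((fun (l : Γ) (g : s) => l⁻¹ * (g : Γ) * l) '' conjugatorsInto Λ s T).Finite :=
  (Set.Finite.pi fun _ => hT).subset <| by
    rintro _ ⟨l, hl, rfl⟩ g -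
    exact hl.2 g g.2

variable (Λ s) in
theorem exists_finset_conjugatorsInto_eq_biUnion_rightCosets [Finite s] (hT : T.Finite) :
    ∃ F : Finset Γ, conjugatorsInto Λ s T =
      ⋃ r ∈ F, op r • ((Λ ⊓ Subgroup.normalizer s : Subgroup Γ) : Set Γ) :=
  exists_finset_eq_biUnion_rightCosets _ _ (fun _ hn _ hl => mul_mem_conjugatorsInto hn hl)
    (fun _ hl _ hl' hll' => ⟨Λ.mul_mem hl.1 (Λ.inv_mem hl'.1),
      Subgroup.centralizer_le_normalizer s <|
        mul_inv_mem_centralizer_of_conj_eq fun g hg => congrFun hll' ⟨g, hg⟩⟩)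
    (finite_image_conj_conjugatorsInto hT)

end Conjugators

theorem conj_into_stabilizer_finite_cosets_general {Γ X : Type*} [Group Γ] [MulAction Γ X]
    (Λ G : Subgroup Γ) [Finite G] (x : X)
    (hstab : (MulAction.stabilizer Γ x : Set Γ).Finite) :
    (∃ F : Finset Γ,
      {l : Γ | l ∈ Λ ∧ ∀ g ∈ G, l⁻¹ * g * l ∈ MulAction.stabilizer Γ x} =
        ⋃ f ∈ F, (fun n => n * f) '' ((Λ ⊓ Subgroup.normalizer (G : Set Γ) : Subgroup Γ) : Set Γ)) ∧
    {s : Set Γ | ∃ l : Γ, (l ∈ Λ ∧ ∀ g ∈ G, l⁻¹ * g * l ∈ MulAction.stabilizer Γ x) ∧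
      s = (fun n => n * l) '' ((Λ ⊓ Subgroup.normalizer (G : Set Γ) : Subgroup Γ) : Set Γ)}.Finite := by
  obtain ⟨F, hF⟩ := exists_finset_conjugatorsInto_eq_biUnion_rightCosets Λ (G : Set Γ) hstab
  simp only [image_mul_right_eq_op_smul]
  exact ⟨⟨F, hF⟩, finite_setOf_rightCoset_of_eq_biUnion _ F hF⟩

/-- Let `Γ` act on `X`, `Λ ≤ Γ` acting freely, `G ≤ Γ` finite, `x ∈ X` fixed by
every element of `G`. If `Stab_Γ(x)` is finite, then
`{λ ∈ Λ | λ⁻¹Gλ ⊆ Stab_Γ(x)}` is a finite union of cosets of `Λ ∩ N_Γ(G)`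
(for the equivalence `λ ∼ λ' ↔ λ'λ⁻¹ ∈ Λ ∩ N_Γ(G)`); in particular the set of
such cosets is finite. -/
theorem conj_into_stabilizer_finite_cosets {Γ X : Type*} [Group Γ] [MulAction Γ X]
    (Λ G : Subgroup Γ) [Finite G]
    (hfree : ∀ l ∈ Λ, ∀ x : X, l • x = x → l = 1) (x : X)
    (hGx : ∀ g ∈ G, g • x = x)
    (hstab : (MulAction.stabilizer Γ x : Set Γ).Finite) :
    (∃ F : Finset Γ,
      {l : Γ | l ∈ Λ ∧ ∀ g ∈ G, l⁻¹ * g * l ∈ MulAction.stabilizer Γ x} =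
        ⋃ f ∈ F, (fun n => n * f) '' ((Λ ⊓ Subgroup.normalizer (G : Set Γ) : Subgroup Γ) : Set Γ)) ∧
    {s : Set Γ | ∃ l : Γ, (l ∈ Λ ∧ ∀ g ∈ G, l⁻¹ * g * l ∈ MulAction.stabilizer Γ x) ∧
      s = (fun n => n * l) '' ((Λ ⊓ Subgroup.normalizer (G : Set Γ) : Subgroup Γ) : Set Γ)}.Finite :=
  conj_into_stabilizer_finite_cosets_general Λ G x hstab
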